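/- For every predicate φ : Point → Prop and every point p: (C_H^Y φ) p holds if and only if φ q holds for every point q that is (H-Y)-reachable in k steps from p for some k ≥ 1. -/

import Mathlib

/-- The simple modal operator induced by the relation `Y`. -/
def Yop {Point : Type*} (Y : Point → Point → Prop) (φ : Point → Prop) (p : Point) : Prop :=
  ∀ q, Y p q → φ q

/-- Belief of agent `i` relative to the indexical set `H`:
`(B_i^H φ) p := ∀ q, q ∼_i p → i ∈ H q → φ q`. -/
def Bop {Point Agent : Type*} (H : Point → Set Agent) (sim : Agent → Point → Point → Prop)
    (i : Agent) (φ : Point → Prop) (p : Point) : Prop :=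
  ∀ q, sim i q p → i ∈ H q → φ q

/-- `(E_H φ) p := ∀ i ∈ H p, (B_i^H φ) p`. -/
def Eop {Point Agent : Type*} (H : Point → Set Agent) (sim : Agent → Point → Point → Prop)
    (φ : Point → Prop) (p : Point) : Prop :=
  ∀ i ∈ H p, Bop H sim i φ p

/-- `(Y∘E_H)^n`, with `(Y∘E_H)^0 = id`, `(Y∘E_H)^{n+1} φ = Y (E_H ((Y∘E_H)^n φ))`. -/
def YEiter {Point Agent : Type*} (H : Point → Set Agent) (sim : Agent → Point → Point → Prop)
    (Y : Point → Point → Prop) : ℕ → (Point → Prop) → (Point → Prop)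
  | 0, φ => φ
  | n + 1, φ => Yop Y (Eop H sim (YEiter H sim Y n φ))

/-- Indexical common knowledge: `(C_H^Y φ) p := ∀ n ≥ 1, ((Y∘E_H)^n φ) p`. -/
def Cop {Point Agent : Type*} (H : Point → Set Agent) (sim : Agent → Point → Point → Prop)
    (Y : Point → Point → Prop) (φ : Point → Prop) (p : Point) : Prop :=
  ∀ n, 1 ≤ n → YEiter H sim Y n φ p

/-- A single `(H-Y)`-reachability step: there are an agent `i` and a point `p'` with
`Y p p'`, `i ∈ H p'`, `i ∈ H q`, and `q ∼_i p'`. -/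
def Step {Point Agent : Type*} (H : Point → Set Agent) (sim : Agent → Point → Point → Prop)
    (Y : Point → Point → Prop) (p q : Point) : Prop :=
  ∃ (i : Agent) (p' : Point), Y p p' ∧ i ∈ H p' ∧ i ∈ H q ∧ sim i q p'

/-- `q` is `(H-Y)`-reachable from `p` in `k` steps. -/
def ReachN {Point Agent : Type*} (H : Point → Set Agent) (sim : Agent → Point → Point → Prop)
    (Y : Point → Point → Prop) : ℕ → Point → Point → Prop
  | 0, p, q => p = q
  | k + 1, p, q => ∃ mid, Step H sim Y p mid ∧ ReachN H sim Y k mid q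

section

variable {Point Agent : Type*} (H : Point → Set Agent) (sim : Agent → Point → Point → Prop)
  (Y : Point → Point → Prop)

theorem yop_eop_iff_forall_step (ψ : Point → Prop) (p : Point) :
    Yop Y (Eop H sim ψ) p ↔ ∀ q, Step H sim Y p q → ψ q := by
  constructor
  · rintro h q ⟨i, p', hY, hi', hi, hsim⟩
    exact h p' hY i hi' q hsim hi
  · intro h p' hY i hi' q hsim hi
    exact h q ⟨i, p', hY, hi', hi, hsim⟩

theorem yEiter_iff_forall_reachN (φ : Point → Prop) (n : ℕ) (p : Point) :
    YEiter H sim Y n φ p ↔ ∀ q, ReachN H sim Y n p q → φ q := by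
  induction n generalizing p with
  | zero => exact ⟨fun h q hpq => hpq ▸ h, fun h => h p rfl⟩
  | succ n ih =>
    simp only [YEiter, ReachN, yop_eop_iff_forall_step, ih]
    exact ⟨fun h q ⟨mid, hstep, hreach⟩ => h mid hstep q hreach,
      fun h mid hstep q hreach => h q ⟨mid, hstep, hreach⟩⟩

end

/-- `(C_H^Y φ) p` holds iff `φ q` holds for every point `q` that is
`(H-Y)`-reachable in `k` steps from `p` for some `k ≥ 1`. -/
theorem commonKnowledge_iff_reach {Point Agent : Type*} (H : Point → Set Agent)
    (sim : Agent → Point → Point → Prop) (Y : Point → Point → Prop)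
    (φ : Point → Prop) (p : Point) :
    Cop H sim Y φ p ↔ ∀ q, (∃ k, 1 ≤ k ∧ ReachN H sim Y k p q) → φ q := by
  simp only [Cop, yEiter_iff_forall_reachN]
  exact ⟨fun h q ⟨k, hk, hreach⟩ => h k hk q hreach,
    fun h k hk q hreach => h q ⟨k, hk, hreach⟩⟩
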